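/- Let $R$ be a commutative ring whose Bass stable range is at most $n$, and let $I \subset R$ be an ideal such that $R/I$ is finitely presented as an $R$-algebra (e.g., $I$ finitely generated). Then every unimodular row of length $n$ over $R/I$ lifts to a unimodular row of length $n$ over $R$. -/

import Mathlib

/-!
Lift the row arbitrarily to `a` over `R`. Unimodularity of `a` modulo `I` gives `s + t = 1`
with `s` in the ideal spanned by `a` and `t ∈ I`, so the row `(a, t)` of length `n + 1` is
unimodular. The stable range condition shortens it to `a + b t`, which is unimodular and
still reduces to the given row because `t ∈ I`.
-/

/-- A row `a : Fin n → R` is unimodular if its entries generate the unit ideal. -/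
def IsUnimodularRow {R : Type*} [CommRing R] {n : ℕ} (a : Fin n → R) : Prop :=
  Ideal.span (Set.range a) = ⊤

/-- The Bass stable range of `R` is at most `n`: every unimodular row of length `n + 1`
can be shortened to a unimodular row of length `n` by elementary modifications. -/
def BassStableRangeLE (R : Type*) [CommRing R] (n : ℕ) : Prop :=
  ∀ a : Fin (n + 1) → R, IsUnimodularRow a →
    ∃ b : Fin n → R,
      IsUnimodularRow (fun i : Fin n => a i.castSucc + b i * a (Fin.last n))

section

open Ideal

variable {R S : Type*} [CommRing R] [CommRing S] {n : ℕ}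

theorem IsUnimodularRow.span_sup_ker_eq_top {f : R →+* S} (hf : Function.Surjective f)
    {a : Fin n → R} (h : IsUnimodularRow (f ∘ a)) : span (Set.range a) ⊔ RingHom.ker f = ⊤ := by
  have hmap : map f (span (Set.range a)) = ⊤ := by
    rwa [map_span, ← Set.range_comp]
  rw [← comap_map_of_surjective' f hf, hmap, comap_top]

theorem exists_mem_isUnimodularRow_snoc {I : Ideal R} {a : Fin n → R}
    (h : span (Set.range a) ⊔ I = ⊤) :
    ∃ t ∈ I, IsUnimodularRow (Fin.snoc a t : Fin (n + 1) → R) := by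
  obtain ⟨s, hs, t, ht, hst⟩ := Submodule.mem_sup.1 (h ▸ Submodule.mem_top : (1 : R) ∈ _)
  refine ⟨t, ht, ?_⟩
  rw [IsUnimodularRow, Fin.range_snoc, eq_top_iff_one, ← hst]
  exact add_mem (span_mono (Set.subset_insert _ _) hs) (subset_span (Set.mem_insert _ _))

theorem BassStableRangeLE.exists_isUnimodularRow_comp_eq (hsr : BassStableRangeLE R n)
    {f : R →+* S} (hf : Function.Surjective f) {a : Fin n → R} (h : IsUnimodularRow (f ∘ a)) :
    ∃ a' : Fin n → R, IsUnimodularRow a' ∧ f ∘ a' = f ∘ a := by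
  obtain ⟨t, ht, hunimod⟩ := exists_mem_isUnimodularRow_snoc (h.span_sup_ker_eq_top hf)
  obtain ⟨b, hb⟩ := hsr _ hunimod
  refine ⟨_, hb, funext fun i => ?_⟩
  simp [Fin.snoc_castSucc, Fin.snoc_last, RingHom.mem_ker.1 ht]

end

theorem stmt_8_general (R : Type*) [CommRing R] (n : ℕ)
    (hsr : BassStableRangeLE R n) (I : Ideal R)
    (abar : Fin n → R ⧸ I) (habar : IsUnimodularRow abar) :
    ∃ a : Fin n → R, IsUnimodularRow a ∧ ∀ i, Ideal.Quotient.mk I (a i) = abar i := by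
  choose a ha using fun i => Ideal.Quotient.mk_surjective (abar i)
  have hlift : Ideal.Quotient.mk I ∘ a = abar := funext ha
  obtain ⟨a', ha', hcomp⟩ :=
    hsr.exists_isUnimodularRow_comp_eq Ideal.Quotient.mk_surjective (hlift ▸ habar)
  exact ⟨a', ha', fun i => (congrFun hcomp i).trans (ha i)⟩

/-- If `R` has Bass stable range at most `n` and `I ⊆ R` is an ideal such that `R/I` is a
finitely presented `R`-algebra (i.e. `I` is finitely generated), then every unimodular row
of length `n` over `R/I` lifts to a unimodular row of length `n` over `R`. -/
theorem stmt_8 (R : Type*) [CommRing R] (n : ℕ)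
    (hsr : BassStableRangeLE R n) (I : Ideal R) (hI : I.FG)
    (abar : Fin n → R ⧸ I) (habar : IsUnimodularRow abar) :
    ∃ a : Fin n → R, IsUnimodularRow a ∧ ∀ i, Ideal.Quotient.mk I (a i) = abar i :=
  stmt_8_general R n hsr I abar habar
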